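/- Let g : ℕ → ℕ and h : ℕ → ℕ → ℕ → ℕ, and let f : ℕ → ℕ → ℕ be defined by primitive recursion: f(x, 0) = g(x) and f(x, y+1) = h(x, y, f(x, y)). Then for all natural numbers k, m, t: f(k, m) = t if and only if there exist natural numbers u, v such that β(u, v, 0) = g(k), β(u, v, i+1) = h(k, i, β(u, v, i)) for all i < m, and β(u, v, m) = t. -/
import Mathlib


/-- Gödel's β-function: `β b c i = b % (1 + (i+1)*c)`. -/
def godelBeta (b c i : ℕ) : ℕ := b % (1 + (i + 1) * c)

lemma godelBeta_eq_beta (u v i : ℕ) : godelBeta u v i = Nat.beta (Nat.pair u v) i := by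
  simp [godelBeta, Nat.beta, Nat.unpair_pair, Nat.add_comm]

/-- Semantic content of Gödel's Theorem VII: the graph of a function defined by
primitive recursion is characterized via the β-function. -/
theorem primrec_graph_beta_characterization
    (g : ℕ → ℕ) (h : ℕ → ℕ → ℕ → ℕ) (f : ℕ → ℕ → ℕ)
    (hf0 : ∀ x, f x 0 = g x)
    (hfs : ∀ x y, f x (y + 1) = h x y (f x y)) :
    ∀ k m t : ℕ,
      f k m = t ↔
        ∃ u v : ℕ,
          godelBeta u v 0 = g k ∧
          (∀ i < m, godelBeta u v (i + 1) = h k i (godelBeta u v i)) ∧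
          godelBeta u v m = t := by
  intro k m t
  constructor
  · rintro rfl
    set l : List ℕ := (List.range (m + 1)).map (f k) with hl
    have hlen : l.length = m + 1 := by simp [hl]
    have hget : ∀ i (hi : i < m + 1), godelBeta (Nat.unbeta l).unpair.1 (Nat.unbeta l).unpair.2 i = f k i := by
      intro i hi
      have := Nat.beta_unbeta_coe l ⟨i, by omega⟩
      simpa [godelBeta_eq_beta, Nat.pair_unpair, hl] using this
    refine ⟨(Nat.unbeta l).unpair.1, (Nat.unbeta l).unpair.2, ?_, ?_, ?_⟩
    · rw [hget 0 (by omega), hf0]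
    · intro i hi
      rw [hget (i + 1) (by omega), hget i (by omega), hfs]
    · exact hget m (by omega)
  · rintro ⟨u, v, h0, hs, hm⟩
    have key : ∀ i ≤ m, godelBeta u v i = f k i := by
      intro i hi
      induction i with
      | zero => rw [h0, hf0]
      | succ n ih =>
        rw [hs n (by omega), ih (by omega), hfs]
    rw [← key m le_rfl, hm]
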